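/- For every nonempty set D ⊆ ℝⁿ and every closed set A ⊆ ℝⁿ containing x, the collection Tan_D(A,x) of pseudotangent sets of A at x directed along D is closed in the Attouch-Wets topology on closed sets containing 0. -/

import Mathlib

open Metric Set Filter Topology Pointwise

noncomputable section

/-- Excess of `A` over `B`: `sup_{a ∈ A} inf_{b ∈ B} |a - b|` (extended-real valued). -/
def ex {n : ℕ} (A B : Set (EuclideanSpace ℝ (Fin n))) : ENNReal :=
  ⨆ a ∈ A, EMetric.infEdist a B

/-- Relative excess of `A` in the closed ball `B(x,r)` over `B`. -/
def relEx {n : ℕ} (x : EuclideanSpace ℝ (Fin n)) (r : ℝ)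
    (A B : Set (EuclideanSpace ℝ (Fin n))) : ℝ :=
  (ex (A ∩ closedBall x r) B).toReal / r

/-- Relative Walkup–Wets distance in `B(x,r)`. -/
def WW {n : ℕ} (x : EuclideanSpace ℝ (Fin n)) (r : ℝ)
    (A B : Set (EuclideanSpace ℝ (Fin n))) : ℝ :=
  max (relEx x r A B) (relEx x r B A)

/-- Attouch–Wets convergence of a sequence of sets to `L` (all sets containing `0`). -/
def AWT {n : ℕ} (F : ℕ → Set (EuclideanSpace ℝ (Fin n)))
    (L : Set (EuclideanSpace ℝ (Fin n))) : Prop :=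
  ∀ r : ℝ, 0 < r → Filter.Tendsto (fun i => WW (0 : EuclideanSpace ℝ (Fin n)) r (F i) L)
    Filter.atTop (nhds 0)

/-- The blow-up `(A - x)/t` of a set `A` at `x` with scale `t`. -/
def blowup {n : ℕ} (A : Set (EuclideanSpace ℝ (Fin n))) (x : EuclideanSpace ℝ (Fin n))
    (t : ℝ) : Set (EuclideanSpace ℝ (Fin n)) :=
  (fun a => t⁻¹ • (a - x)) '' A

/-- `T` is a pseudotangent set of `A` at `x` directed along `D`. -/
def IsPseudoTangentAlong {n : ℕ} (A : Set (EuclideanSpace ℝ (Fin n)))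
    (x : EuclideanSpace ℝ (Fin n)) (D : Set (EuclideanSpace ℝ (Fin n)))
    (T : Set (EuclideanSpace ℝ (Fin n))) : Prop :=
  IsClosed T ∧ (0 : EuclideanSpace ℝ (Fin n)) ∈ T ∧
    ∃ (xs : ℕ → EuclideanSpace ℝ (Fin n)) (rs : ℕ → ℝ),
      (∀ i, xs i ∈ A) ∧ (∀ i, 0 < rs i) ∧
      Filter.Tendsto xs Filter.atTop (nhds x) ∧
      Filter.Tendsto rs Filter.atTop (nhds 0) ∧
      (∀ i, (rs i)⁻¹ • (xs i - x) ∈ D) ∧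
      AWT (fun i => blowup A (xs i) (rs i)) T

/-- `T` is a pseudotangent set of `A` at `x`. -/
def IsPseudoTangent {n : ℕ} (A : Set (EuclideanSpace ℝ (Fin n)))
    (x : EuclideanSpace ℝ (Fin n)) (T : Set (EuclideanSpace ℝ (Fin n))) : Prop :=
  IsPseudoTangentAlong A x Set.univ T

/-- `T` is a tangent set of `A` at `x`. -/
def IsTangent {n : ℕ} (A : Set (EuclideanSpace ℝ (Fin n)))
    (x : EuclideanSpace ℝ (Fin n)) (T : Set (EuclideanSpace ℝ (Fin n))) : Prop :=
  IsClosed T ∧ (0 : EuclideanSpace ℝ (Fin n)) ∈ T ∧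
    ∃ rs : ℕ → ℝ, (∀ i, 0 < rs i) ∧ Filter.Tendsto rs Filter.atTop (nhds 0) ∧
      AWT (fun i => blowup A x (rs i)) T

/-!
A diagonal argument. For sets through a common centre `c`, the relative distance satisfies the
quasi-triangle inequality `WW c r A C ≤ 2 (WW c (2r) A B + WW c (2r) B C)` as soon as both
terms are `< 1/2`, and shrinking the radius from `R` to `r` multiplies it by at most `R / r`.
So for each `k` one picks `T i` and then a blow-up of `A` along `T i` such that the blow-up is
`1 / (k+1)^2`-close to `L` on the ball of radius `k+1`, its base point is `1/(k+1)`-close to `x`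
and its scale is below `1/(k+1)`; on each fixed ball the error is then `O(1/k)`.
-/

lemma Metric.infEDist_inter_closedBall_le {α : Type*} [PseudoMetricSpace α] {a c : α}
    {B : Set α} {r r' : ℝ} (ha : a ∈ closedBall c r)
    (hd : infEDist a B < ENNReal.ofReal (r' - r)) :
    infEDist a (B ∩ closedBall c r') ≤ infEDist a B := by
  refine le_of_forall_gt_imp_ge_of_dense fun z hz => ?_
  obtain ⟨b, hbB, hb⟩ := infEDist_lt_iff.1 (lt_min hz hd)
  have hab : dist a b < r' - r := edist_lt_ofReal.1 (hb.trans_le (min_le_right _ _))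
  have hbc : b ∈ closedBall c r' := by
    have := dist_triangle b a c
    rw [dist_comm] at hab
    exact mem_closedBall.2 (by linarith [mem_closedBall.1 ha])
  exact (infEDist_le_edist_of_mem (show b ∈ B ∩ closedBall c r' from ⟨hbB, hbc⟩)).trans
    (hb.le.trans (min_le_left _ _))

section Excess

variable {n : ℕ}

lemma ex_mono_left {A A' B : Set (EuclideanSpace ℝ (Fin n))} (h : A ⊆ A') :
    ex A B ≤ ex A' B :=
  iSup₂_le fun a ha => le_iSup₂_of_le a (h ha) le_rfl

lemma ex_inter_closedBall_le {A B : Set (EuclideanSpace ℝ (Fin n))}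
    {c : EuclideanSpace ℝ (Fin n)} (hc : c ∈ B) (r : ℝ) :
    ex (A ∩ closedBall c r) B ≤ ENNReal.ofReal r :=
  iSup₂_le fun a ha => (infEDist_le_edist_of_mem hc).trans
    (edist_dist a c ▸ ENNReal.ofReal_le_ofReal (mem_closedBall.1 ha.2))

lemma ex_inter_closedBall_ne_top {A B : Set (EuclideanSpace ℝ (Fin n))}
    {c : EuclideanSpace ℝ (Fin n)} (hc : c ∈ B) (r : ℝ) :
    ex (A ∩ closedBall c r) B ≠ ⊤ :=
  ne_top_of_le_ne_top ENNReal.ofReal_ne_top (ex_inter_closedBall_le hc r)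

lemma infEDist_le_infEDist_add_ex (a : EuclideanSpace ℝ (Fin n))
    (S C : Set (EuclideanSpace ℝ (Fin n))) :
    infEDist a C ≤ infEDist a S + ex S C := by
  simp only [infEDist, ENNReal.iInf_add]
  exact le_iInf₂ fun b hb => infEDist_le_edist_add_infEDist.trans
    (add_le_add le_rfl (le_iSup₂_of_le b hb le_rfl))

lemma ex_inter_closedBall_le_add {A B C : Set (EuclideanSpace ℝ (Fin n))}
    {c : EuclideanSpace ℝ (Fin n)} {r r' : ℝ}
    (hd : ex (A ∩ closedBall c r) B < ENNReal.ofReal (r' - r)) :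
    ex (A ∩ closedBall c r) C
      ≤ ex (A ∩ closedBall c r) B + ex (B ∩ closedBall c r') C := by
  refine iSup₂_le fun a ha => ?_
  have haB : infEDist a B ≤ ex (A ∩ closedBall c r) B := le_iSup₂_of_le a ha le_rfl
  calc infEDist a C
      ≤ infEDist a (B ∩ closedBall c r') + ex (B ∩ closedBall c r') C :=
        infEDist_le_infEDist_add_ex a _ C
    _ ≤ ex (A ∩ closedBall c r) B + ex (B ∩ closedBall c r') C := by
        gcongr
        exact (infEDist_inter_closedBall_le ha.2 (haB.trans_lt hd)).trans haB

end Excess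

section RelativeDistance

variable {n : ℕ} {c : EuclideanSpace ℝ (Fin n)} {A B C : Set (EuclideanSpace ℝ (Fin n))}

lemma WW_nonneg {r : ℝ} (hr : 0 < r) : 0 ≤ WW c r A B :=
  le_max_of_le_left (div_nonneg ENNReal.toReal_nonneg hr.le)

lemma relEx_le_add (hB : c ∈ B) (hC : c ∈ C) {r : ℝ} (hr : 0 < r)
    (hAB : relEx c (2 * r) A B < 1 / 2) :
    relEx c r A C ≤ 2 * (relEx c (2 * r) A B + relEx c (2 * r) B C) := by
  set e₁ := ex (A ∩ closedBall c (2 * r)) B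
  set e₂ := ex (B ∩ closedBall c (2 * r)) C
  have he₁ : e₁ ≠ ⊤ := ex_inter_closedBall_ne_top hB _
  have he₂ : e₂ ≠ ⊤ := ex_inter_closedBall_ne_top hC _
  have hsub : ex (A ∩ closedBall c r) B ≤ e₁ :=
    ex_mono_left (inter_subset_inter_right _ (closedBall_subset_closedBall (by linarith)))
  have hsmall : ex (A ∩ closedBall c r) B < ENNReal.ofReal (2 * r - r) := by
    have : e₁.toReal < 2 * r - r := by
      have := (div_lt_iff₀ (by positivity)).1 hAB
      linarith
    exact hsub.trans_lt ((ENNReal.lt_ofReal_iff_toReal_lt he₁).2 this)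
  have hAC : (ex (A ∩ closedBall c r) C).toReal ≤ e₁.toReal + e₂.toReal := by
    rw [← ENNReal.toReal_add he₁ he₂]
    exact ENNReal.toReal_mono (ENNReal.add_ne_top.2 ⟨he₁, he₂⟩)
      ((ex_inter_closedBall_le_add hsmall).trans (add_le_add_left hsub _))
  calc relEx c r A C ≤ (e₁.toReal + e₂.toReal) / r := by unfold relEx; gcongr
    _ = 2 * (e₁.toReal / (2 * r) + e₂.toReal / (2 * r)) := by field_simp

lemma WW_le_add (hA : c ∈ A) (hB : c ∈ B) (hC : c ∈ C) {r : ℝ} (hr : 0 < r)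
    (hAB : WW c (2 * r) A B < 1 / 2) (hBC : WW c (2 * r) B C < 1 / 2) :
    WW c r A C ≤ 2 * (WW c (2 * r) A B + WW c (2 * r) B C) := by
  have hAC := relEx_le_add hB hC hr ((le_max_left _ _).trans_lt hAB)
  have hCA := relEx_le_add hB hA hr ((le_max_right _ _).trans_lt hBC)
  refine max_le (hAC.trans ?_) (hCA.trans ?_)
  · gcongr <;> exact le_max_left _ _
  · rw [add_comm]
    gcongr <;> exact le_max_right _ _

lemma relEx_le_mul (hB : c ∈ B) {r R : ℝ} (hr : 0 < r) (hrR : r ≤ R) :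
    relEx c r A B ≤ (R / r) * relEx c R A B := by
  have hR : 0 < R := hr.trans_le hrR
  have hmono : (ex (A ∩ closedBall c r) B).toReal ≤ (ex (A ∩ closedBall c R) B).toReal :=
    ENNReal.toReal_mono (ex_inter_closedBall_ne_top hB R)
      (ex_mono_left (inter_subset_inter_right _ (closedBall_subset_closedBall hrR)))
  calc relEx c r A B ≤ (ex (A ∩ closedBall c R) B).toReal / r := by unfold relEx; gcongr
    _ = (R / r) * relEx c R A B := by unfold relEx; field_simp

lemma WW_le_mul (hA : c ∈ A) (hB : c ∈ B) {r R : ℝ} (hr : 0 < r) (hrR : r ≤ R) :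
    WW c r A B ≤ (R / r) * WW c R A B := by
  have hRr : 0 ≤ R / r := div_nonneg (hr.le.trans hrR) hr.le
  exact max_le
    ((relEx_le_mul hB hr hrR).trans (mul_le_mul_of_nonneg_left (le_max_left _ _) hRr))
    ((relEx_le_mul hA hr hrR).trans (mul_le_mul_of_nonneg_left (le_max_right _ _) hRr))

end RelativeDistance

section AttouchWets

variable {n : ℕ}

lemma zero_mem_blowup {A : Set (EuclideanSpace ℝ (Fin n))} {y : EuclideanSpace ℝ (Fin n)}
    (hy : y ∈ A) (t : ℝ) : (0 : EuclideanSpace ℝ (Fin n)) ∈ blowup A y t :=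
  ⟨y, hy, by simp⟩

lemma AWT.exists_eventually_WW_lt {T : ℕ → Set (EuclideanSpace ℝ (Fin n))}
    {F : ℕ → ℕ → Set (EuclideanSpace ℝ (Fin n))} {L : Set (EuclideanSpace ℝ (Fin n))}
    (hF0 : ∀ i j, (0 : EuclideanSpace ℝ (Fin n)) ∈ F i j)
    (hT0 : ∀ i, (0 : EuclideanSpace ℝ (Fin n)) ∈ T i)
    (hL0 : (0 : EuclideanSpace ℝ (Fin n)) ∈ L)
    (hTL : AWT T L) (hFT : ∀ i, AWT (F i) (T i)) {R ε : ℝ} (hR : 0 < R) (hε : 0 < ε) :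
    ∃ i, ∀ᶠ j in atTop, WW 0 R (F i j) L < ε := by
  set δ := min (ε / 4) (1 / 2)
  have hδ : 0 < δ := lt_min (by positivity) one_half_pos
  have h2R : 0 < 2 * R := by positivity
  obtain ⟨i, hi⟩ := ((hTL _ h2R).eventually_lt_const hδ).exists
  refine ⟨i, ((hFT i _ h2R).eventually_lt_const hδ).mono fun j hj => ?_⟩
  have hδ₁ : δ ≤ ε / 4 := min_le_left _ _
  have hδ₂ : δ ≤ 1 / 2 := min_le_right _ _
  calc WW 0 R (F i j) L ≤ 2 * (WW 0 (2 * R) (F i j) (T i) + WW 0 (2 * R) (T i) L) :=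
        WW_le_add (hF0 i j) (hT0 i) hL0 hR (hj.trans_le hδ₂) (hi.trans_le hδ₂)
    _ < ε := by linarith

lemma awt_of_WW_le {F : ℕ → Set (EuclideanSpace ℝ (Fin n))}
    {L : Set (EuclideanSpace ℝ (Fin n))} (hF0 : ∀ k, (0 : EuclideanSpace ℝ (Fin n)) ∈ F k)
    (hL0 : (0 : EuclideanSpace ℝ (Fin n)) ∈ L)
    (h : ∀ k : ℕ, WW 0 (k + 1) (F k) L ≤ 1 / ((k : ℝ) + 1) ^ 2) : AWT F L := by
  intro r hr
  obtain ⟨N, hN⟩ := exists_nat_ge r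
  refine squeeze_zero' (.of_forall fun k => WW_nonneg hr) ?_
    (by simpa using tendsto_one_div_add_atTop_nhds_zero_nat.const_mul r⁻¹)
  filter_upwards [eventually_ge_atTop N] with k hk
  have hrk : r ≤ (k : ℝ) + 1 := by linarith [(Nat.cast_le (α := ℝ)).2 hk]
  calc WW 0 r (F k) L ≤ ((k + 1) / r) * WW 0 (k + 1) (F k) L := WW_le_mul (hF0 k) hL0 hr hrk
    _ ≤ ((k + 1) / r) * (1 / ((k : ℝ) + 1) ^ 2) := by gcongr; exact h k
    _ = r⁻¹ * ((k : ℝ) + 1)⁻¹ := by field_simp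

end AttouchWets

theorem isPseudoTangentAlong_closed_general {n : ℕ} (A D : Set (EuclideanSpace ℝ (Fin n)))
    (x : EuclideanSpace ℝ (Fin n))
    (T : ℕ → Set (EuclideanSpace ℝ (Fin n)))
    (hT : ∀ i, IsPseudoTangentAlong A x D (T i))
    (L : Set (EuclideanSpace ℝ (Fin n))) (hLc : IsClosed L)
    (hL0 : (0 : EuclideanSpace ℝ (Fin n)) ∈ L) (hTL : AWT T L) :
    IsPseudoTangentAlong A x D L := by
  choose _ hT0 xs rs hxsA hrs hxs hrs0 hxsD hAW using hT
  have hdiag : ∀ k : ℕ, ∃ i j,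
      WW 0 (k + 1) (blowup A (xs i j) (rs i j)) L ≤ 1 / ((k : ℝ) + 1) ^ 2 ∧
        dist (xs i j) x < 1 / ((k : ℝ) + 1) ∧ rs i j < 1 / ((k : ℝ) + 1) := by
    intro k
    have hk : (0 : ℝ) < k + 1 := k.cast_add_one_pos
    obtain ⟨i, hi⟩ := hTL.exists_eventually_WW_lt (fun i j => zero_mem_blowup (hxsA i j) _)
      hT0 hL0 hAW hk (by positivity : (0 : ℝ) < 1 / ((k : ℝ) + 1) ^ 2)
    obtain ⟨j, hWW, hdist, hrj⟩ := (hi.and (((hxs i).eventually (ball_mem_nhds x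
      (one_div_pos.2 hk))).and ((hrs0 i).eventually_lt_const (one_div_pos.2 hk)))).exists
    exact ⟨i, j, hWW.le, hdist, hrj⟩
  choose I J hWW hdist hrs' using hdiag
  refine ⟨hLc, hL0, fun k => xs (I k) (J k), fun k => rs (I k) (J k), fun k => hxsA _ _,
    fun k => hrs _ _, ?_, ?_, fun k => hxsD _ _,
    awt_of_WW_le (fun k => zero_mem_blowup (hxsA _ _) _) hL0 hWW⟩
  · exact tendsto_iff_dist_tendsto_zero.2 (squeeze_zero (fun _ => dist_nonneg)
      (fun k => (hdist k).le) tendsto_one_div_add_atTop_nhds_zero_nat)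
  · exact squeeze_zero (fun k => (hrs _ _).le) (fun k => (hrs' k).le)
      tendsto_one_div_add_atTop_nhds_zero_nat

/-- The collection of pseudotangent sets of `A` at `x` directed along `D` is
(sequentially) closed in the Attouch–Wets topology on closed sets containing `0`. -/
theorem isPseudoTangentAlong_closed {n : ℕ} (A D : Set (EuclideanSpace ℝ (Fin n)))
    (hD : D.Nonempty) (hAc : IsClosed A) (x : EuclideanSpace ℝ (Fin n)) (hx : x ∈ A)
    (T : ℕ → Set (EuclideanSpace ℝ (Fin n)))
    (hT : ∀ i, IsPseudoTangentAlong A x D (T i))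
    (L : Set (EuclideanSpace ℝ (Fin n))) (hLc : IsClosed L)
    (hL0 : (0 : EuclideanSpace ℝ (Fin n)) ∈ L) (hTL : AWT T L) :
    IsPseudoTangentAlong A x D L :=
  isPseudoTangentAlong_closed_general A D x T hT L hLc hL0 hTL
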